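/- arXiv:2409.16274 — 4 statements merged into one kernel-verified Lean document; each statement's English description precedes it below -/
import Mathlib

section
/- Let (S,≺) be a W-semigroup and let R be a left ≺-continuous relation on S. Then the relation (R + id)₊ (the additive closure of R + id, where id is the identity relation on S) is left ≺-continuous, and the generated additive preorder ⪅_R coincides with the generated preorder ≤^{(R + id)₊} on the underlying W-set (S,0,≺). -/
universe u v

section Defs

variable {X : Type u} {Y : Type v}

/-- Composition of relations: `a (R ∘ R') b` iff there is `c` with `R a c` and `R' c b`. -/
def RelComp (R R' : X → X → Prop) : X → X → Prop := fun a b => ∃ c, R a c ∧ R' c b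

/-- Containment of relations: `R ⊆ R'`. -/
def RelLE (R R' : X → X → Prop) : Prop := ∀ a b, R a b → R' a b

/-- A relation is dense if `R ⊆ R ∘ R`. -/
def RelDense (R : X → X → Prop) : Prop := ∀ a b, R a b → ∃ c, R a c ∧ R c b

/-- The induced preorder `≤_≺`: `a ≤_≺ b` iff `a^≺ ⊆ b^≺`. -/
def IndLE (R : X → X → Prop) : X → X → Prop := fun a b => ∀ x, R x a → R x b

/-- A morphism between sets with relations: monotone and continuous. -/
def IsRelMorphism (P : X → X → Prop) (Q : Y → Y → Prop) (f : X → Y) : Prop :=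
  (∀ a b, P a b → Q (f a) (f b)) ∧ (∀ a b, Q b (f a) → ∃ a', P a' a ∧ Q b (f a'))

/-- `L` is left `P`-continuous: `P ∘ L ⊆ P ∘ L ∘ P`. -/
def LeftCont (P L : X → X → Prop) : Prop :=
  ∀ a b, RelComp P L a b → RelComp P (RelComp L P) a b

/-- `Q` is a `P`-prenormal relation: transitive, `P ⊆ Q` and `Q = Q ∘ P`. -/
def Prenormal (P Q : X → X → Prop) : Prop :=
  Transitive Q ∧ RelLE P Q ∧ ∀ a b, Q a b ↔ RelComp Q P a b

/-- The pair `(Q, L)` is admissible: `L` is a preorder and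
`a^{L∘Q} ⊆ b^{L∘Q}` implies `L a b`. -/
def Admissible (Q L : X → X → Prop) : Prop :=
  Reflexive L ∧ Transitive L ∧
    ∀ a b, (∀ x, RelComp L Q x a → RelComp L Q x b) → L a b

/-- The pair `(Q, L)` is auxiliary: `Q ⊆ L` and `L ∘ Q ∘ L ⊆ Q`. -/
def Auxiliary (Q L : X → X → Prop) : Prop :=
  RelLE Q L ∧ RelLE (RelComp L (RelComp Q L)) Q

/-- The pair `(Q, L)` is minimal admissible: `L` is the preorder induced by `Q`. -/
def MinimalAdmissible (Q L : X → X → Prop) : Prop :=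
  ∀ a b, L a b ↔ IndLE Q a b

/-- The pair `(R, L)` is left `R`-closed. -/
def LeftClosed (R L : X → X → Prop) : Prop :=
  ∀ a b, (∀ c, R c a → RelComp R L c b) → RelComp (IndLE R) L a b

/-- Axiom (W2) for `(X, Q, L)`. -/
def AxiomW2 (Q L : X → X → Prop) : Prop :=
  ∀ a c, (∀ b, Q b a → L b c) → L a c

/-- Axiom (W1): every `a` admits a `P`-increasing sequence in `a^P`, cofinal in `a^P`. -/
def AxiomW1 (P : X → X → Prop) : Prop :=
  ∀ a, ∃ f : ℕ → X, (∀ k, P (f k) (f (k + 1))) ∧ (∀ k, P (f k) a) ∧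
    ∀ b, P b a → ∃ k, P b (f k)

/-- `(X, z, P)` is a W-set. -/
def IsWSet (P : X → X → Prop) (z : X) : Prop :=
  Transitive P ∧ (∀ a, P z a) ∧ AxiomW1 P

/-- Order on admissible pairs. -/
def PairLE (P₁ L₁ P₂ L₂ : X → X → Prop) : Prop :=
  RelLE P₁ P₂ ∧ RelLE L₁ L₂ ∧
    ∀ a b, (∀ x, RelComp L₁ P₁ x a → RelComp L₁ P₁ x b) →
      ∀ x, RelComp L₂ P₂ x a → RelComp L₂ P₂ x b

/-- `L` is a preorder satisfying the three generating conditions over base `P` and relation `R`. -/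
def GenGood (P R L : X → X → Prop) : Prop :=
  Reflexive L ∧ Transitive L ∧
    (∀ a b, IndLE P a b → L a b) ∧
    (∀ a b, R a b → L a b) ∧
    ∀ a b, (∀ c, P c a → L c b) → L a b

/-- `R` is `P`-almost transitive: `P ∘ R ∘ P ∘ R ∘ P ⊆ P ∘ R ∘ P`. -/
def AlmostTransitive (P R : X → X → Prop) : Prop :=
  ∀ a b, RelComp P (RelComp R (RelComp P (RelComp R P))) a b →
    RelComp P (RelComp R P) a b

end Defs

section AddDefs

variable {S : Type u} {T : Type v} [AddCommMonoid S] [AddCommMonoid T]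

/-- A relation on a monoid is additively closed. -/
def AddClosed (R : S → S → Prop) : Prop :=
  ∀ a b a' b', R a b → R a' b' → R (a + a') (b + b')

/-- Axiom (W4). -/
def AxiomW4 (P : S → S → Prop) : Prop :=
  ∀ a b c, P a (b + c) → ∃ b' c', P b' b ∧ P c' c ∧ P a (b' + c')

/-- `(S, P)` is a W-semigroup. -/
def IsWSemigroup (P : S → S → Prop) : Prop :=
  Transitive P ∧ (∀ a, P 0 a) ∧ AddClosed P ∧ AxiomW1 P ∧ AxiomW4 P

/-- A W-morphism between W-semigroups. -/
def IsWMorphism (P : S → S → Prop) (Q : T → T → Prop) (f : S → T) : Prop :=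
  f 0 = 0 ∧ (∀ a b, f (a + b) = f a + f b) ∧ IsRelMorphism P Q f

/-- The kernel preorder of a map `f` with respect to the relation `PT` on the codomain. -/
def kerLE (PT : T → T → Prop) (f : S → T) : S → S → Prop :=
  fun a b => ∀ x, PT x (f a) → PT x (f b)

/-- An ideal of `(S, P)`. -/
def IsIdeal (P : S → S → Prop) (I : Set S) : Prop :=
  (0 : S) ∈ I ∧ (∀ a b, a ∈ I → b ∈ I → a + b ∈ I) ∧ ∀ a b, P a b → b ∈ I → a ∈ I

/-- A closed ideal of `(S, P)`. -/
def IsClosedIdeal (P : S → S → Prop) (I : Set S) : Prop :=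
  IsIdeal P I ∧ ∀ a, (∀ x, P x a → x ∈ I) → a ∈ I

/-- The preorder `≤_I` associated with an ideal `I`. -/
def idealLE (P : S → S → Prop) (I : Set S) : S → S → Prop :=
  fun a b => ∀ x, P x a → ∃ y ∈ I, P x (b + y)

/-- The ideal `I_α = {a : a ≤ 0}` associated with a pair whose preorder is `L`. -/
def pairIdeal (L : S → S → Prop) : Set S := {a | L a 0}

/-- The sum of two relations. -/
def RelAdd (R R' : S → S → Prop) : S → S → Prop :=
  fun x y => ∃ a b a' b', R a b ∧ R' a' b' ∧ x = a + a' ∧ y = b + b'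

/-- The additive closure of a relation. -/
def AddClosure (R : S → S → Prop) : S → S → Prop :=
  fun x y => ∃ n : ℕ, 0 < n ∧ ∃ a b : Fin n → S,
    (∀ i, R (a i) (b i)) ∧ x = ∑ i, a i ∧ y = ∑ i, b i

/-- `L` is a preorder satisfying the four additive generating conditions. -/
def GenGoodAdd (P R L : S → S → Prop) : Prop :=
  GenGood P R L ∧ AddClosed L

/-- `s` is a supremum of the sequence `f` with respect to the induced preorder of `P`. -/
def IsSupSeq (P : S → S → Prop) (f : ℕ → S) (s : S) : Prop :=
  (∀ n, IndLE P (f n) s) ∧ ∀ c, (∀ n, IndLE P (f n) c) → IndLE P s c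

/-- Axiom (O1): every increasing sequence has a supremum. -/
def AxiomO1 (P : S → S → Prop) : Prop :=
  ∀ f : ℕ → S, (∀ n, IndLE P (f n) (f (n + 1))) → ∃ s, IsSupSeq P f s

/-- Compact containment relation associated with `IndLE P`. -/
def WayBelow (P : S → S → Prop) (a b : S) : Prop :=
  ∀ (f : ℕ → S) (s : S), (∀ n, IndLE P (f n) (f (n + 1))) → IsSupSeq P f s →
    IndLE P b s → ∃ n, IndLE P a (f n)

/-- `S` has almost refinement. -/
def HasAlmostRefinement (P : S → S → Prop) : Prop :=
  ∀ a₁ a₂ a₁' a₂' b₁ b₂ : S, P a₁' a₁ → P a₂' a₂ → P (a₁ + a₂) (b₁ + b₂) →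
    ∃ x₁₁ x₁₂ x₂₁ x₂₂ : S,
      P a₁' (x₁₁ + x₁₂) ∧ P a₂' (x₂₁ + x₂₂) ∧ P (x₁₁ + x₂₁) b₁ ∧ P (x₁₂ + x₂₂) b₂

/-- A relation `R` has `P`-almost refinement. -/
def RelAlmostRefinement (P R : S → S → Prop) : Prop :=
  ∀ (m n : ℕ), 0 < m → 0 < n → ∀ (a a' : Fin m → S) (b : Fin n → S),
    (∀ i, P (a' i) (a i)) →
    RelComp P (RelComp R P) (∑ i, a i) (∑ j, b j) →
    ∃ x y : Fin m → Fin n → S,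
      (∀ i, P (a' i) (∑ j, x i j)) ∧
      (∀ i j, RelComp P (RelComp R P) (x i j) (y i j)) ∧
      (∀ j, P (∑ i, y i j) (b j))

end AddDefs

section Aux16

variable {S : Type u} [AddCommMonoid S]

/-- Additivity of a relation over finite sums, given it relates 0 to 0. -/
lemma aux16_sum {L : S → S → Prop} (h00 : L 0 0) (hadd : AddClosed L) :
    ∀ (n : ℕ) (f g : Fin n → S), (∀ i, L (f i) (g i)) → L (∑ i, f i) (∑ i, g i) := by
  intro n
  induction n with
  | zero => intro f g _; simpa using h00
  | succ n ih =>
    intro f g h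
    rw [Fin.sum_univ_succ, Fin.sum_univ_succ]
    exact hadd _ _ _ _ (h 0) (ih _ _ fun i => h i.succ)

/-- Finitary version of axiom (W4). -/
lemma aux16_W4sum {P : S → S → Prop} (hPt : Transitive P) (hP0 : ∀ a, P 0 a)
    (hPadd : AddClosed P) (hW4 : AxiomW4 P) :
    ∀ (n : ℕ) (x : Fin n → S) (a : S), P a (∑ i, x i) →
      ∃ x' : Fin n → S, (∀ i, P (x' i) (x i)) ∧ P a (∑ i, x' i) := by
  intro n
  induction n with
  | zero =>
    intro x a ha
    exact ⟨Fin.elim0, fun i => i.elim0, by simpa using ha⟩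
  | succ n ih =>
    intro x a ha
    rw [Fin.sum_univ_succ] at ha
    obtain ⟨b', c', hb', hc', ha'⟩ := hW4 _ _ _ ha
    obtain ⟨t, ht, hct⟩ := ih (fun i => x i.succ) c' hc'
    obtain ⟨b'', c'', hb'', hc'', ha''⟩ := hW4 _ _ _ ha'
    refine ⟨Fin.cons b' t, ?_, ?_⟩
    · intro i
      refine Fin.cases ?_ ?_ i
      · simpa using hb'
      · intro j; simpa using ht j
    · rw [Fin.sum_univ_succ]
      simp only [Fin.cons_zero, Fin.cons_succ]
      exact hPt ha'' (hPadd _ _ _ _ hb'' (hPt hc'' hct))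

/-- `R ⊆ (R + id)₊`. -/
lemma aux16_QofR {R : S → S → Prop} {a b : S} (h : R a b) :
    AddClosure (RelAdd R (fun a b => a = b)) a b := by
  refine ⟨1, one_pos, fun _ => a, fun _ => b, ?_, by simp, by simp⟩
  intro _
  exact ⟨a, b, 0, 0, h, rfl, by simp, by simp⟩

/-- `(R + id)₊` is translation invariant. -/
lemma aux16_Qadd {R : S → S → Prop} {a b : S} (c : S)
    (h : AddClosure (RelAdd R (fun a b => a = b)) a b) :
    AddClosure (RelAdd R (fun a b => a = b)) (a + c) (b + c) := by
  obtain ⟨n, hn, f, g, hfg, hx, hy⟩ := h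
  obtain ⟨m, rfl⟩ := Nat.exists_eq_succ_of_ne_zero hn.ne'
  obtain ⟨u, w, v, v', hR, hv, hf0, hg0⟩ := hfg 0
  refine ⟨m + 1, Nat.succ_pos _, Fin.cons (f 0 + c) (fun j => f j.succ),
    Fin.cons (g 0 + c) (fun j => g j.succ), ?_, ?_, ?_⟩
  · intro i
    refine Fin.cases ?_ ?_ i
    · refine ⟨u, w, v + c, v' + c, hR, by rw [hv], ?_, ?_⟩
      · simp [Fin.cons_zero, hf0, add_assoc]
      · simp [Fin.cons_zero, hg0, add_assoc]
    · intro j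
      simpa using hfg j.succ
  · rw [Fin.sum_univ_succ] at hx ⊢
    simp only [Fin.cons_zero, Fin.cons_succ]
    rw [hx]; abel
  · rw [Fin.sum_univ_succ] at hy ⊢
    simp only [Fin.cons_zero, Fin.cons_succ]
    rw [hy]; abel

/-- `IndLE P` is translation invariant. -/
lemma aux16_IndAdd {P : S → S → Prop} (hPt : Transitive P) (hPadd : AddClosed P)
    (hW4 : AxiomW4 P) {a b : S} (c : S) (h : IndLE P a b) : IndLE P (a + c) (b + c) := by
  intro x hx
  obtain ⟨a', c', ha', hc', hx'⟩ := hW4 _ _ _ hx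
  exact hPt hx' (hPadd _ _ _ _ (h _ ha') hc')

/-- `IndLE P` on right translations by `≺`-smaller elements. -/
lemma aux16_IndRight {P : S → S → Prop} (hPt : Transitive P) (hPadd : AddClosed P)
    (hW4 : AxiomW4 P) {c' c : S} (b : S) (h : P c' c) : IndLE P (b + c') (b + c) := by
  intro x hx
  obtain ⟨b'', c'', hb'', hc'', hx'⟩ := hW4 _ _ _ hx
  exact hPt hx' (hPadd _ _ _ _ hb'' (hPt hc'' h))

/-- Left `≺`-continuity of `(R + id)₊`. -/
lemma aux16_cont {P R : S → S → Prop} (hW : IsWSemigroup P) (hRcont : LeftCont P R) :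
    LeftCont P (AddClosure (RelAdd R (fun a b => a = b))) := by
  obtain ⟨hPt, hP0, hPadd, _, hW4⟩ := hW
  rintro a y ⟨x, hax, n, hn, f, g, hfg, rfl, rfl⟩
  choose u w v v' hR hv hf hg using hfg
  simp only [← hv] at hg
  -- decompose a ≺ ∑ f i
  obtain ⟨f', hf', haf'⟩ := aux16_W4sum hPt hP0 hPadd hW4 n f a hax
  -- for each i: f' i ≺ u i + v i, split twice
  have key : ∀ i, ∃ ci di vi', P (f' i) (ci + vi') ∧ R ci di ∧ P (di + vi') (g i) := by
    intro i
    have h1 : P (f' i) (u i + v i) := by rw [← hf i]; exact hf' i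
    obtain ⟨u1, v1, hu1, hv1, h2⟩ := hW4 _ _ _ h1
    obtain ⟨u2, v2, hu2, hv2, h3⟩ := hW4 _ _ _ h2
    obtain ⟨ci, hci, di, hcd, hdi⟩ := hRcont (u1) (w i) ⟨u i, hu1, hR i⟩
    refine ⟨ci, di, v1, ?_, hcd, ?_⟩
    · exact hPt h3 (hPadd _ _ _ _ (hPt hu2 hci) hv2)
    · rw [hg i]
      exact hPadd _ _ _ _ hdi hv1
  choose ci di vi' h1 h2 h3 using key
  refine ⟨∑ i, (ci i + vi' i), ?_, ∑ i, (di i + vi' i), ?_, ?_⟩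
  · exact hPt haf' (aux16_sum (hP0 0) hPadd n _ _ h1)
  · exact ⟨n, hn, _, _, fun i => ⟨ci i, di i, vi' i, vi' i, h2 i, rfl, rfl, rfl⟩, rfl, rfl⟩
  · exact aux16_sum (hP0 0) hPadd n _ _ h3

end Aux16

/-- `(R + id)₊` is left ≺-continuous and the generated additive preorder `⪅_R`
coincides with the generated preorder `≤^{(R + id)₊}`. -/
theorem statement16 {S : Type u} [AddCommMonoid S] (P R : S → S → Prop)
    (hW : IsWSemigroup P) (hRcont : LeftCont P R)
    (L₁ : S → S → Prop) (hL₁ : GenGoodAdd P R L₁)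
    (hL₁min : ∀ L', GenGoodAdd P R L' → RelLE L₁ L')
    (L₂ : S → S → Prop)
    (hL₂ : GenGood P (AddClosure (RelAdd R (fun a b => a = b))) L₂)
    (hL₂min : ∀ L', GenGood P (AddClosure (RelAdd R (fun a b => a = b))) L' → RelLE L₂ L') :
    LeftCont P (AddClosure (RelAdd R (fun a b => a = b))) ∧
    ∀ a b, L₁ a b ↔ L₂ a b := by
  obtain ⟨hPt, hP0, hPadd, hW1, hW4⟩ := hW
  set Q : S → S → Prop := AddClosure (RelAdd R (fun a b => a = b)) with hQdef
  obtain ⟨⟨hL₁refl, hL₁trans, hL₁ind, hL₁R, hL₁w2⟩, hL₁add⟩ := hL₁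
  obtain ⟨hL₂refl, hL₂trans, hL₂ind, hL₂Q, hL₂w2⟩ := hL₂
  -- L₁ is GenGood for Q
  have hL₁Q : ∀ a b, Q a b → L₁ a b := by
    rintro a b ⟨n, hn, f, g, hfg, rfl, rfl⟩
    refine aux16_sum (hL₁refl 0) hL₁add n f g ?_
    intro i
    obtain ⟨u, w, v, v', hR, hv, hf, hg⟩ := hfg i
    rw [hf, hg, ← hv]
    exact hL₁add _ _ _ _ (hL₁R _ _ hR) (hL₁refl v)
  have hGG₁ : GenGood P Q L₁ := ⟨hL₁refl, hL₁trans, hL₁ind, hL₁Q, hL₁w2⟩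
  have h21 : RelLE L₂ L₁ := hL₂min L₁ hGG₁
  -- L₂ is translation-invariant
  have htrans : ∀ a b, L₂ a b → ∀ c, L₂ (a + c) (b + c) := by
    have hGG' : GenGood P Q (fun a b => ∀ c, L₂ (a + c) (b + c)) := by
      refine ⟨fun a c => hL₂refl _, fun a b d hab hbd c => hL₂trans (hab c) (hbd c),
        ?_, ?_, ?_⟩
      · intro a b h c
        exact hL₂ind _ _ (aux16_IndAdd hPt hPadd hW4 c h)
      · intro a b h c
        exact hL₂Q _ _ (aux16_Qadd c h)
      · intro a b h c
        refine hL₂w2 _ _ ?_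
        intro e he
        obtain ⟨d, c', hd, hc', he'⟩ := hW4 _ _ _ he
        have h1 : L₂ e (d + c') := hL₂ind _ _ (fun x hx => hPt hx he')
        have h2 : L₂ (d + c') (b + c') := h d hd c'
        have h3 : L₂ (b + c') (b + c) := hL₂ind _ _ (aux16_IndRight hPt hPadd hW4 b hc')
        exact hL₂trans (hL₂trans h1 h2) h3
    intro a b h c
    exact hL₂min _ hGG' a b h c
  have hL₂add : AddClosed L₂ := by
    intro a b a' b' h h'
    have h1 : L₂ (a + a') (b + a') := htrans a b h a'
    have h2 : L₂ (b + a') (b + b') := by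
      rw [add_comm b a', add_comm b b']
      exact htrans a' b' h' b
    exact hL₂trans h1 h2
  have hGG₂ : GenGoodAdd P R L₂ :=
    ⟨⟨hL₂refl, hL₂trans, hL₂ind, fun a b h => hL₂Q _ _ (aux16_QofR h), hL₂w2⟩, hL₂add⟩
  have h12 : RelLE L₁ L₂ := hL₁min L₂ hGG₂
  exact ⟨aux16_cont ⟨hPt, hP0, hPadd, hW1, hW4⟩ hRcont,
    fun a b => ⟨fun h => h12 a b h, fun h => h21 a b h⟩⟩
end

section
/- Let (S,≺) be a W-semigroup and let R be a left ≺-continuous relation on S. Then the pair (≺, ⪅_R) is the smallest ≺-normal left ≺-closed admissible pair containing R; that is: (≺, ⪅_R) is an admissible pair with ⪅_R additively closed, left ≺-continuous and left ≺-closed, R ⊆ ⪅_R, and for every ≺-normal left ≺-closed admissible pair (≼,≤) with R ⊆ ≤ one has (≺, ⪅_R) ≤ (≼,≤) in the order on admissible pairs. -/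
universe u v

/-- `(≺, ⪅_R)` is the smallest ≺-normal left ≺-closed admissible pair
containing `R`. -/
theorem statement17 {S : Type u} [AddCommMonoid S] (P R : S → S → Prop)
    (hW : IsWSemigroup P) (hRcont : LeftCont P R)
    (L : S → S → Prop) (hL : GenGoodAdd P R L)
    (hmin : ∀ L', GenGoodAdd P R L' → RelLE L L') :
    Admissible P L ∧ AddClosed L ∧ LeftCont P L ∧ LeftClosed P L ∧ RelLE R L ∧
    ∀ Q L' : S → S → Prop, Admissible Q L' → AddClosed Q → AddClosed L' →
      Prenormal P Q → LeftCont P L' → LeftClosed P L' → RelLE R L' →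
      PairLE P L Q L' := by
  obtain ⟨hPtrans, hP0, hPadd, hW1, hW4⟩ := hW
  obtain ⟨⟨hrefl, htrans, hind, hR, hE⟩, hadd⟩ := hL
  -- density of P
  have hdense : ∀ a b, P a b → ∃ c, P a c ∧ P c b := by
    intro a b hab
    obtain ⟨f, hf1, hf2, hf3⟩ := hW1 b
    obtain ⟨k, hk⟩ := hf3 a hab
    exact ⟨f k, hk, hf2 k⟩
  have hPL : ∀ a b, P a b → L a b := fun a b h =>
    hind a b (fun x hx => hPtrans hx h)
  -- auxiliary relation M, shown to contain L by minimality
  have hML : RelLE L (fun a b => ∀ a', P a' a → ∃ b', P b' b ∧ L a' b') := by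
    apply hmin
    refine ⟨⟨?_, ?_, ?_, ?_, ?_⟩, ?_⟩
    · intro a a' ha'
      exact ⟨a', ha', hrefl a'⟩
    · intro a b c hab hbc a' ha'
      obtain ⟨b', hb', hL1⟩ := hab a' ha'
      obtain ⟨c', hc', hL2⟩ := hbc b' hb'
      exact ⟨c', hc', htrans hL1 hL2⟩
    · intro a b hab a' ha'
      obtain ⟨c, h1, h2⟩ := hdense a' b (hab a' ha')
      exact ⟨c, h2, hPL _ _ h1⟩
    · intro a b hab a' ha'
      obtain ⟨c, hc, d, hd, hdb⟩ := hRcont a' b ⟨a, ha', hab⟩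
      exact ⟨d, hdb, htrans (hPL _ _ hc) (hR _ _ hd)⟩
    · intro a b h a' ha'
      obtain ⟨c, h1, h2⟩ := hdense a' a ha'
      exact h c h2 a' h1
    · intro a b a' b' hab ha'b' x hx
      obtain ⟨u, v, hu, hv, hx2⟩ := hW4 x a a' hx
      obtain ⟨u', hu', hLu⟩ := hab u hu
      obtain ⟨v', hv', hLv⟩ := ha'b' v hv
      exact ⟨u' + v', hPadd _ _ _ _ hu' hv',
        htrans (hPL _ _ hx2) (hadd _ _ _ _ hLu hLv)⟩
  refine ⟨⟨hrefl, htrans, ?_⟩, hadd, ?_, ?_, hR, ?_⟩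
  · -- admissibility
    intro a b h
    apply hE
    intro c hc
    obtain ⟨d, hLd, hdb⟩ := h c ⟨c, hrefl c, hc⟩
    exact htrans hLd (hPL _ _ hdb)
  · -- left continuity
    rintro a b ⟨c, hac, hcb⟩
    obtain ⟨e, hae, hec⟩ := hdense a c hac
    obtain ⟨b', hb', hLe⟩ := hML c b hcb e hec
    exact ⟨e, hae, b', hLe, hb'⟩
  · -- left closedness
    intro a b h
    refine ⟨a, fun x hx => hx, ?_⟩
    apply hE
    intro c hc
    obtain ⟨d, hcd, hdb⟩ := h c hc
    exact htrans (hPL _ _ hcd) hdb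
  · -- minimality
    intro Q L' hAdm hQadd hL'add hPre hCont hClosed hRL'
    obtain ⟨hQtrans, hPQ, hQP⟩ := hPre
    obtain ⟨hL'refl, hL'trans, hL'adm⟩ := hAdm
    have hQL' : RelLE Q L' := by
      intro a b hab
      apply hL'adm
      rintro x ⟨c, hxc, hca⟩
      exact ⟨c, hxc, hQtrans hca hab⟩
    have hIndL' : ∀ a b, IndLE P a b → L' a b := by
      intro a b hab
      apply hL'adm
      rintro x ⟨c, hxc, hca⟩
      obtain ⟨d, hcd, hda⟩ := (hQP c a).1 hca
      exact ⟨c, hxc, hQtrans hcd (hPQ _ _ (hab d hda))⟩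
    have hEL' : ∀ a b, (∀ c, P c a → L' c b) → L' a b := by
      intro a b h
      have h2 : ∀ c, P c a → RelComp P L' c b := by
        intro c hc
        obtain ⟨d, hcd, hda⟩ := hdense c a hc
        exact ⟨d, hcd, h d hda⟩
      obtain ⟨e, hae, heb⟩ := hClosed a b h2
      exact hL'trans (hIndL' a e hae) heb
    have hLL' : RelLE L L' :=
      hmin L' ⟨⟨hL'refl, hL'trans, hIndL', hRL', hEL'⟩, hL'add⟩
    refine ⟨hPQ, hLL', ?_⟩
    rintro a b h x ⟨c, hxc, hca⟩
    obtain ⟨d, hcd, hda⟩ := (hQP c a).1 hca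
    obtain ⟨e, hde, heb⟩ := h d ⟨d, hrefl d, hda⟩
    exact ⟨e, hL'trans hxc (hL'trans (hQL' _ _ hcd) (hLL' _ _ hde)),
      hPQ _ _ heb⟩
end

section
/- Let (S,≺) be a W-semigroup having almost refinement and let R be a left ≺-continuous relation on S that has ≺-almost refinement. If R is ≺-almost transitive, then so are the additive closures R₊ and (R + id)₊. -/
universe u v

section ProofAux
set_option linter.unusedSectionVars false

variable {S : Type u} [AddCommMonoid S] {P R : S → S → Prop}

lemma pdense (hW1 : AxiomW1 P) {a b : S} (h : P a b) : ∃ c, P a c ∧ P c b := by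
  obtain ⟨f, _, hfb, hcof⟩ := hW1 b
  obtain ⟨k, hk⟩ := hcof a h
  exact ⟨f k, hk, hfb k⟩

lemma psum (hP0 : ∀ a : S, P 0 a) (hPadd : AddClosed P) :
    ∀ {n : ℕ} {f g : Fin n → S}, (∀ i, P (f i) (g i)) → P (∑ i, f i) (∑ i, g i) := by
  intro n
  induction n with
  | zero => intro f g _; simpa using hP0 0
  | succ n ih =>
    intro f g h
    rw [Fin.sum_univ_castSucc, Fin.sum_univ_castSucc (f := g)]
    exact hPadd _ _ _ _ (ih fun i => h _) (h _)

lemma w4n (hPt : Transitive P) (hPadd : AddClosed P) (hW4 : AxiomW4 P) :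
    ∀ {n : ℕ} {b : Fin n → S} {a : S}, P a (∑ i, b i) →
      ∃ b' : Fin n → S, (∀ i, P (b' i) (b i)) ∧ P a (∑ i, b' i) := by
  intro n
  induction n with
  | zero => intro b a h; exact ⟨fun i => i.elim0, fun i => i.elim0, by simpa using h⟩
  | succ n ih =>
    intro b a h
    rw [Fin.sum_univ_castSucc] at h
    obtain ⟨e, c, he, hc, h1⟩ := hW4 _ _ _ h
    obtain ⟨e1, c1, he1, hc1, h2⟩ := hW4 _ _ _ h1
    obtain ⟨b0, hb0, hb0s⟩ := ih (hPt he1 he)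
    refine ⟨Fin.snoc b0 c, ?_, ?_⟩
    · intro i
      refine Fin.lastCases ?_ ?_ i
      · simpa using hc
      · intro j; simpa using hb0 j
    · rw [Fin.sum_univ_castSucc]
      simp only [Fin.snoc_castSucc, Fin.snoc_last]
      exact hPt h2 (hPadd _ _ _ _ hb0s hc1)

lemma ref2n (hPt : Transitive P) (hP0 : ∀ a : S, P 0 a) (hPadd : AddClosed P)
    (hW4 : AxiomW4 P) (hSref : HasAlmostRefinement P) :
    ∀ {n : ℕ} {a₁ a₂ a₁' a₂' : S} {b : Fin n → S},
      P a₁' a₁ → P a₂' a₂ → P (a₁ + a₂) (∑ j, b j) →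
      ∃ u v : Fin n → S, P a₁' (∑ j, u j) ∧ P a₂' (∑ j, v j) ∧
        ∀ j, P (u j + v j) (b j) := by
  intro n
  induction n with
  | zero =>
    intro a₁ a₂ a₁' a₂' b h1 h2 h
    simp only [Finset.univ_eq_empty, Finset.sum_empty] at h
    refine ⟨fun i => i.elim0, fun i => i.elim0, ?_, ?_, fun j => j.elim0⟩
    · have h' : P (a₁' + 0) (a₁ + a₂) := hPadd _ _ _ _ h1 (hP0 a₂)
      simpa using hPt h' h
    · have h' : P (0 + a₂') (a₁ + a₂) := hPadd _ _ _ _ (hP0 a₁) h2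
      simpa using hPt h' h
  | succ n ih =>
    intro a₁ a₂ a₁' a₂' b h1 h2 h
    rw [Fin.sum_univ_castSucc] at h
    obtain ⟨x11, x12, x21, x22, hr1, hr2, hc1, hc2⟩ := hSref a₁ a₂ a₁' a₂' _ _ h1 h2 h
    obtain ⟨x11', x12', hx11', hx12', hq1⟩ := hW4 _ _ _ hr1
    obtain ⟨x21', x22', hx21', hx22', hq2⟩ := hW4 _ _ _ hr2
    obtain ⟨u0, v0, hu0, hv0, hcol⟩ := ih hx11' hx21' hc1
    refine ⟨Fin.snoc u0 x12, Fin.snoc v0 x22, ?_, ?_, ?_⟩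
    · rw [Fin.sum_univ_castSucc]
      simp only [Fin.snoc_castSucc, Fin.snoc_last]
      exact hPt hq1 (hPadd _ _ _ _ hu0 hx12')
    · rw [Fin.sum_univ_castSucc]
      simp only [Fin.snoc_castSucc, Fin.snoc_last]
      exact hPt hq2 (hPadd _ _ _ _ hv0 hx22')
    · intro j
      refine Fin.lastCases ?_ ?_ j
      · simp only [Fin.snoc_last]; exact hc2
      · intro j; simp only [Fin.snoc_castSucc]; exact hcol j

lemma refmn (hPt : Transitive P) (hP0 : ∀ a : S, P 0 a) (hPadd : AddClosed P)
    (hW1 : AxiomW1 P) (hW4 : AxiomW4 P) (hSref : HasAlmostRefinement P) :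
    ∀ {m n : ℕ} {a a' : Fin m → S} {b : Fin n → S},
      (∀ i, P (a' i) (a i)) → P (∑ i, a i) (∑ j, b j) →
      ∃ x : Fin m → Fin n → S, (∀ i, P (a' i) (∑ j, x i j)) ∧
        ∀ j, P (∑ i, x i j) (b j) := by
  intro m
  induction m with
  | zero =>
    intro n a a' b _ _
    exact ⟨fun i => i.elim0, fun i => i.elim0, fun j => by simpa using hP0 (b j)⟩
  | succ m ih =>
    intro n a a' b ha h
    choose t ht1 ht2 using fun i : Fin m => pdense hW1 (ha i.castSucc)
    rw [Fin.sum_univ_castSucc] at h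
    obtain ⟨u, v, huu, hvv, hcol⟩ :=
      ref2n hPt hP0 hPadd hW4 hSref (psum hP0 hPadd ht2) (ha (Fin.last m)) h
    obtain ⟨v', hv'1, hv'2⟩ := w4n hPt hPadd hW4 hvv
    obtain ⟨x0, hx0r, hx0c⟩ := ih ht1 huu
    refine ⟨Fin.snoc x0 v', ?_, ?_⟩
    · intro i
      refine Fin.lastCases ?_ ?_ i
      · simpa using hv'2
      · intro j; simpa using hx0r j
    · intro j
      rw [Fin.sum_univ_castSucc]
      simp only [Fin.snoc_castSucc, Fin.snoc_last]
      exact hPt (hPadd _ _ _ _ (hx0c j) (hv'1 j)) (hcol j)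


lemma qadd : AddClosed (AddClosure R) := by
  rintro a b a' b' ⟨n, hn, f, g, hfg, rfl, rfl⟩ ⟨n', hn', f', g', hfg', rfl, rfl⟩
  refine ⟨n + n', by omega, Fin.append f f', Fin.append g g', ?_, ?_, ?_⟩
  · intro i
    refine Fin.addCases (fun i => ?_) (fun i => ?_) i
    · simpa [Fin.append_left] using hfg i
    · simpa [Fin.append_right] using hfg' i
  · rw [Fin.sum_univ_add]; simp [Fin.append_left, Fin.append_right]
  · rw [Fin.sum_univ_add]; simp [Fin.append_left, Fin.append_right]

lemma qsum : ∀ {n : ℕ}, 0 < n → ∀ {f g : Fin n → S},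
    (∀ i, AddClosure R (f i) (g i)) → AddClosure R (∑ i, f i) (∑ i, g i) := by
  intro n
  induction n with
  | zero => intro h; omega
  | succ n ih =>
    intro _ f g hfg
    rw [Fin.sum_univ_castSucc, Fin.sum_univ_castSucc (f := g)]
    rcases Nat.eq_zero_or_pos n with hn | hn
    · subst hn
      simpa using hfg (Fin.last 0)
    · exact qadd _ _ _ _ (ih hn fun i => hfg i.castSucc) (hfg (Fin.last n))

lemma qleftcont (hPt : Transitive P) (hP0 : ∀ a : S, P 0 a) (hPadd : AddClosed P)
    (hW4 : AxiomW4 P) (hRcont : LeftCont P R) :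
    LeftCont P (AddClosure R) := by
  rintro a v ⟨u, hau, n, hn, s, t, hst, rfl, rfl⟩
  obtain ⟨s', hs'1, hs'2⟩ := w4n hPt hPadd hW4 hau
  choose p hp q hq1 hq2 using fun i => hRcont (s' i) (t i) ⟨s i, hs'1 i, hst i⟩
  exact ⟨∑ i, p i, hPt hs'2 (psum hP0 hPadd hp), ∑ i, q i,
    ⟨n, hn, p, q, hq1, rfl, rfl⟩, psum hP0 hPadd hq2⟩

lemma mainAT (hPt : Transitive P) (hP0 : ∀ a : S, P 0 a) (hPadd : AddClosed P)
    (hW1 : AxiomW1 P) (hW4 : AxiomW4 P) (hSref : HasAlmostRefinement P)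
    (hRcont : LeftCont P R) (hRref : RelAlmostRefinement P R)
    (hRat : AlmostTransitive P R) :
    AlmostTransitive P (AddClosure R) := by
  rintro a b ⟨x0, hax, x', ⟨m, hm, s, t, hst, rfl, rfl⟩, u0, hxu, u', ⟨n, hn, c, d, hcd, rfl, rfl⟩, hub⟩
  obtain ⟨s', hs'p, has'⟩ := w4n hPt hPadd hW4 hax
  obtain ⟨s'', hs''p, has''⟩ := w4n hPt hPadd hW4 has'
  choose p hp q hq hqt using fun i => hRcont (s' i) (t i) ⟨s i, hs'p i, hst i⟩
  obtain ⟨x, hxr, hxc⟩ := refmn hPt hP0 hPadd hW1 hW4 hSref hqt hxu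
  choose x' hx'p hqx' using fun i => w4n hPt hPadd hW4 (hxr i)
  have hcolPRP : ∀ j, RelComp P (RelComp R P) (∑ i, x i j) (∑ _ : Fin 1, d j) := by
    intro j
    obtain ⟨γ, hγ1, δ, hδ1, hδ2⟩ := hRcont (∑ i, x i j) (d j) ⟨c j, hxc j, hcd j⟩
    exact ⟨γ, hγ1, δ, hδ1, by simpa using hδ2⟩
  choose U V hU hUV hV using fun j =>
    hRref m 1 hm one_pos (fun i => x i j) (fun i => x' i j) (fun _ => d j)
      (fun i => hx'p i j) (hcolPRP j)
  have hx'U : ∀ i j, P (x' i j) (U j i 0) := fun i j => by simpa using hU j i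
  have hrowPRP : ∀ i, RelComp P (RelComp R P) (∑ _ : Fin 1, s' i) (∑ j, U j i 0) := by
    intro i
    exact ⟨p i, by simpa using hp i, q i, hq i,
      hPt (hqx' i) (psum hP0 hPadd (hx'U i))⟩
  choose W Z hW hWZ hZ using fun i =>
    hRref 1 n one_pos hn (fun _ => s' i) (fun _ => s'' i) (fun j => U j i 0)
      (fun _ => hs''p i) (hrowPRP i)
  have key : ∀ i j, RelComp P (RelComp R P) (W i 0 j) (V j i 0) := by
    intro i j
    obtain ⟨A, hA, B, hB, hBz⟩ := hWZ i 0 j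
    obtain ⟨C, hC, D, hD, hDv⟩ := hUV j i 0
    exact hRat _ _ ⟨A, hA, B, hB, C, hPt (hPt hBz (by simpa using hZ i j)) hC, D, hD, hDv⟩
  choose A hA B hB hBV using key
  refine ⟨∑ i, ∑ j, A i j, ?_, ∑ i, ∑ j, B i j, ?_, ?_⟩
  · refine hPt has'' (psum hP0 hPadd fun i => ?_)
    exact hPt (by simpa using hW i 0) (psum hP0 hPadd fun j => hA i j)
  · exact qsum hm fun i => ⟨n, hn, A i, B i, hB i, rfl, rfl⟩
  · have h1 : P (∑ i, ∑ j, B i j) (∑ i, ∑ j, V j i 0) :=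
      psum hP0 hPadd fun i => psum hP0 hPadd fun j => hBV i j
    have h2 : P (∑ j, ∑ i, V j i 0) (∑ j, d j) :=
      psum hP0 hPadd fun j => by simpa using hV j 0
    rw [show (∑ i : Fin m, ∑ j : Fin n, V j i 0) = ∑ j : Fin n, ∑ i : Fin m, V j i 0
      from Finset.sum_comm] at h1
    exact hPt (hPt h1 h2) hub


lemma instA (hPt : Transitive P) (hP0 : ∀ a : S, P 0 a) (hPadd : AddClosed P)
    (hW1 : AxiomW1 P) (hW4 : AxiomW4 P) (hSref : HasAlmostRefinement P)
    (hRcont : LeftCont P R) (hRref : RelAlmostRefinement P R)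
    {x1 x2 x1' x2' h : S} (h1 : P x1' x1) (h2 : P x2' x2)
    (hh : RelComp P (RelComp (AddClosure R) P) (x1 + x2) h) :
    ∃ u₁ u₂ v₁ v₂, P x1' u₁ ∧ P x2' u₂ ∧
      RelComp P (RelComp (AddClosure R) P) u₁ v₁ ∧
      RelComp P (RelComp (AddClosure R) P) u₂ v₂ ∧ P (v₁ + v₂) h := by
  obtain ⟨γ, hγ, δ, ⟨N, hN, g, h', hgh, rfl, rfl⟩, hδ⟩ := hh
  have hsum : P (∑ i : Fin 2, ![x1, x2] i) (∑ k, g k) := by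
    simpa [Fin.sum_univ_two] using hγ
  have hprime : ∀ i : Fin 2, P (![x1', x2'] i) (![x1, x2] i) := by
    intro i; fin_cases i <;> simpa
  obtain ⟨y, hyr, hyc⟩ := refmn hPt hP0 hPadd hW1 hW4 hSref hprime hsum
  obtain ⟨y0', hy0'p, hy0's⟩ := w4n hPt hPadd hW4 (hyr 0)
  obtain ⟨y1', hy1'p, hy1's⟩ := w4n hPt hPadd hW4 (hyr 1)
  have hk : ∀ k, RelComp P (RelComp R P) (∑ i : Fin 2, y i k) (∑ _ : Fin 1, h' k) := by
    intro k
    obtain ⟨γ', h1', δ', h2', h3'⟩ := hRcont _ _ ⟨g k, hyc k, hgh k⟩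
    exact ⟨γ', h1', δ', h2', by simpa using h3'⟩
  have hprime2 : ∀ k (i : Fin 2), P (![y0' k, y1' k] i) (y i k) := by
    intro k i
    fin_cases i
    · simpa using hy0'p k
    · simpa using hy1'p k
  choose U V hU hUV hV using fun k =>
    hRref 2 1 two_pos one_pos (fun i => y i k) ![y0' k, y1' k] (fun _ => h' k)
      (hprime2 k) (hk k)
  have mk : ∀ i : Fin 2,
      RelComp P (RelComp (AddClosure R) P) (∑ k, U k i 0) (∑ k, V k i 0) := by
    intro i
    choose A hA B hB hBv using fun k => hUV k i 0
    exact ⟨∑ k, A k, psum hP0 hPadd hA, ∑ k, B k, ⟨N, hN, A, B, hB, rfl, rfl⟩,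
      psum hP0 hPadd hBv⟩
  refine ⟨∑ k, U k 0 0, ∑ k, U k 1 0, ∑ k, V k 0 0, ∑ k, V k 1 0, ?_, ?_, mk 0, mk 1, ?_⟩
  · refine hPt (by simpa using hy0's) (psum hP0 hPadd fun k => ?_)
    simpa using hU k 0
  · refine hPt (by simpa using hy1's) (psum hP0 hPadd fun k => ?_)
    simpa using hU k 1
  · rw [← Finset.sum_add_distrib]
    refine hPt (psum hP0 hPadd fun k => ?_) hδ
    simpa [Fin.sum_univ_two] using hV k 0

lemma instB (hPt : Transitive P) (hP0 : ∀ a : S, P 0 a) (hPadd : AddClosed P)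
    (hW1 : AxiomW1 P) (hW4 : AxiomW4 P) (hSref : HasAlmostRefinement P)
    (hRcont : LeftCont P R) (hRref : RelAlmostRefinement P R)
    {e₁ e₂ b₁ b₂ : S} (he : P e₂ e₁)
    (hh : RelComp P (RelComp (AddClosure R) P) e₁ (b₁ + b₂)) :
    ∃ w₁ w₂ z₁ z₂, P e₂ (w₁ + w₂) ∧
      RelComp P (RelComp (AddClosure R) P) w₁ z₁ ∧
      RelComp P (RelComp (AddClosure R) P) w₂ z₂ ∧ P z₁ b₁ ∧ P z₂ b₂ := by
  obtain ⟨γ, hγ, δ, ⟨N, hN, g, h', hgh, rfl, rfl⟩, hδ⟩ := hh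
  obtain ⟨g', hg'p, hg's⟩ := w4n hPt hPadd hW4 hγ
  obtain ⟨g'', hg''p, hg''s⟩ := w4n hPt hPadd hW4 (hPt he hg's)
  choose p hp q hq hq2 using fun k => hRcont (g' k) (h' k) ⟨g k, hg'p k, hgh k⟩
  have hsum : P (∑ k, h' k) (∑ j : Fin 2, ![b₁, b₂] j) := by
    simpa [Fin.sum_univ_two] using hδ
  obtain ⟨y, hyr, hyc⟩ := refmn hPt hP0 hPadd hW1 hW4 hSref hq2 hsum
  have hrow : ∀ k, RelComp P (RelComp R P) (∑ _ : Fin 1, g' k) (∑ j : Fin 2, y k j) :=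
    fun k => ⟨p k, by simpa using hp k, q k, hq k, hyr k⟩
  choose W Z hW hWZ hZ using fun k =>
    hRref 1 2 one_pos two_pos (fun _ => g' k) (fun _ => g'' k) (y k)
      (fun _ => hg''p k) (hrow k)
  have mk : ∀ j : Fin 2,
      RelComp P (RelComp (AddClosure R) P) (∑ k, W k 0 j) (∑ k, Z k 0 j) := by
    intro j
    choose A hA B hB hBv using fun k => hWZ k 0 j
    exact ⟨∑ k, A k, psum hP0 hPadd hA, ∑ k, B k, ⟨N, hN, A, B, hB, rfl, rfl⟩,
      psum hP0 hPadd hBv⟩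
  refine ⟨∑ k, W k 0 0, ∑ k, W k 0 1, ∑ k, Z k 0 0, ∑ k, Z k 0 1, ?_, mk 0, mk 1, ?_, ?_⟩
  · rw [← Finset.sum_add_distrib]
    refine hPt hg''s (psum hP0 hPadd fun k => ?_)
    simpa [Fin.sum_univ_two] using hW k 0
  · refine hPt (psum hP0 hPadd fun k => ?_) (by simpa using hyc 0)
    simpa using hZ k 0
  · refine hPt (psum hP0 hPadd fun k => ?_) (by simpa using hyc 1)
    simpa using hZ k 1


lemma part2AT (hPt : Transitive P) (hP0 : ∀ a : S, P 0 a) (hPadd : AddClosed P)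
    (hW1 : AxiomW1 P) (hW4 : AxiomW4 P) (hSref : HasAlmostRefinement P)
    (hRcont : LeftCont P R) (hRref : RelAlmostRefinement P R)
    (hRat : AlmostTransitive P R) :
    AlmostTransitive P (RelAdd (AddClosure R) (fun a b => a = b)) := by
  have hQlc := qleftcont hPt hP0 hPadd hW4 hRcont
  have hQat := mainAT hPt hP0 hPadd hW1 hW4 hSref hRcont hRref hRat
  rintro a b ⟨c1, hac1, c2, ⟨e, f, w, _, hef, rfl, rfl, rfl⟩, c3, h23, c4,
    ⟨g, h, xx, _, hgh, rfl, rfl, rfl⟩, h4b⟩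
  obtain ⟨e1, w1, he1, hw1, ha1⟩ := hW4 _ _ _ hac1
  obtain ⟨e2, w2, he2, hw2, ha2⟩ := hW4 _ _ _ ha1
  obtain ⟨p, hp, q, hq, hqf⟩ := hQlc e1 f ⟨e, he1, hef⟩
  obtain ⟨x11, x12, x21, x22, hr1, hr2, hc1, hc2⟩ := hSref f w q w1 g xx hqf hw1 h23
  obtain ⟨x11', x12', h11', h12', hq'⟩ := hW4 _ _ _ hr1
  obtain ⟨x21', x22', h21', h22', hw'⟩ := hW4 _ _ _ hr2
  obtain ⟨x21'', x22'', h21'', h22'', hw''⟩ := hW4 _ _ _ hw'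
  have hcolQ : RelComp P (RelComp (AddClosure R) P) (x11 + x21) h :=
    hQlc _ _ ⟨g, hc1, hgh⟩
  obtain ⟨u₁, u₂, v₁, v₂, hu₁, hu₂, huv₁, huv₂, hvh⟩ :=
    instA hPt hP0 hPadd hW1 hW4 hSref hRcont hRref h11' h21' hcolQ
  have hq2 : RelComp P (RelComp (AddClosure R) P) e1 (u₁ + x12) :=
    ⟨p, hp, q, hq, hPt hq' (hPadd _ _ _ _ hu₁ h12')⟩
  obtain ⟨w11, w12, z11, z12, hew, hwz1, hwz2, hz11, hz12⟩ :=
    instB hPt hP0 hPadd hW1 hW4 hSref hRcont hRref he2 hq2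
  obtain ⟨A₁, hA₁, B₁, hB₁, hB₁v⟩ : RelComp P (RelComp (AddClosure R) P) w11 v₁ := by
    obtain ⟨γ1, hγ1, δ1, hδ1, hδ1'⟩ := hwz1
    obtain ⟨γ2, hγ2, δ2, hδ2, hδ2'⟩ := huv₁
    exact hQat _ _ ⟨γ1, hγ1, δ1, hδ1, γ2, hPt (hPt hδ1' hz11) hγ2, δ2, hδ2, hδ2'⟩
  obtain ⟨A₂, hA₂, B₂, hB₂, hB₂v⟩ := huv₂
  have hx21A : P x21' A₂ := hPt hu₂ hA₂
  obtain ⟨A₃, hA₃, B₃, hB₃, hB₃z⟩ := hwz2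
  refine ⟨A₁ + A₃ + A₂ + x22', ?_, B₁ + B₃ + B₂ + x22',
    ⟨A₁ + A₃ + A₂, B₁ + B₃ + B₂, x22', x22', ?_, rfl, rfl, rfl⟩, ?_⟩
  · have hE : P e2 (A₁ + A₃) := hPt hew (hPadd _ _ _ _ hA₁ hA₃)
    have hW2 : P w2 (A₂ + x22') :=
      hPt (hPt hw2 hw'') (hPadd _ _ _ _ (hPt h21'' hx21A) h22'')
    have hfin : P a (A₁ + A₃ + (A₂ + x22')) := hPt ha2 (hPadd _ _ _ _ hE hW2)
    rwa [← add_assoc] at hfin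
  · exact qadd _ _ _ _ (qadd _ _ _ _ hB₁ hB₃) hB₂
  · have h12 : P (B₁ + B₂) h := hPt (hPadd _ _ _ _ hB₁v hB₂v) hvh
    have h3 : P (B₃ + x22') xx := hPt (hPadd _ _ _ _ (hPt hB₃z hz12) h22') hc2
    have hfin : P (B₁ + B₂ + (B₃ + x22')) b := hPt (hPadd _ _ _ _ h12 h3) h4b
    have heq : B₁ + B₃ + B₂ + x22' = B₁ + B₂ + (B₃ + x22') := by abel
    rwa [heq]

lemma at_congr {Q₁ Q₂ : S → S → Prop} (h : ∀ a b, Q₁ a b ↔ Q₂ a b)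
    (hat : AlmostTransitive P Q₁) : AlmostTransitive P Q₂ := by
  rintro a b ⟨x, h1, x', h2, u, h3, u', h4, h5⟩
  obtain ⟨y, g1, y', g2, g3⟩ :=
    hat a b ⟨x, h1, x', (h _ _).mpr h2, u, h3, u', (h _ _).mpr h4, h5⟩
  exact ⟨y, g1, y', (h _ _).mp g2, g3⟩

lemma eqClosure : ∀ a b : S, RelAdd (AddClosure R) (fun a b => a = b) a b ↔
    AddClosure (RelAdd R (fun a b => a = b)) a b := by
  intro a b
  constructor
  · rintro ⟨u, v, w, _, ⟨n, hn, c, d, hcd, rfl, rfl⟩, rfl, rfl, rfl⟩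
    refine ⟨n, hn, fun i => c i + (if i = (⟨0, hn⟩ : Fin n) then w else 0),
      fun i => d i + (if i = (⟨0, hn⟩ : Fin n) then w else 0), ?_, ?_, ?_⟩
    · intro i; exact ⟨c i, d i, _, _, hcd i, rfl, rfl, rfl⟩
    · rw [Finset.sum_add_distrib, Finset.sum_ite_eq']
      simp
    · rw [Finset.sum_add_distrib, Finset.sum_ite_eq']
      simp
  · rintro ⟨n, hn, A, B, hAB, rfl, rfl⟩
    choose c d w w2 hcd hww hA hB using hAB
    refine ⟨∑ i, c i, ∑ i, d i, ∑ i, w i, ∑ i, w i,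
      ⟨n, hn, c, d, hcd, rfl, rfl⟩, rfl, ?_, ?_⟩
    · rw [← Finset.sum_add_distrib]
      exact Finset.sum_congr rfl fun i _ => hA i
    · rw [← Finset.sum_add_distrib]
      refine Finset.sum_congr rfl fun i _ => ?_
      rw [hB i, hww i]

end ProofAux

/-- almost transitivity passes to additive closures under almost refinement. -/
theorem statement18 {S : Type u} [AddCommMonoid S] (P R : S → S → Prop)
    (hW : IsWSemigroup P) (hSref : HasAlmostRefinement P)
    (hRcont : LeftCont P R) (hRref : RelAlmostRefinement P R)
    (hRat : AlmostTransitive P R) :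
    AlmostTransitive P (AddClosure R) ∧
    AlmostTransitive P (AddClosure (RelAdd R (fun a b => a = b))) := by
  obtain ⟨hPt, hP0, hPadd, hW1, hW4⟩ := hW
  constructor
  · exact mainAT hPt hP0 hPadd hW1 hW4 hSref hRcont hRref hRat
  · exact at_congr eqClosure
      (part2AT hPt hP0 hPadd hW1 hW4 hSref hRcont hRref hRat)
end

section
/- Let G be a group acting on a W-semigroup (S,≺). Then for any a,b ∈ S the following are equivalent: (i) a ≤_G b; (ii) for every c with c ≺ a, either c ≺ b or there exist positive integers m and n, elements g_{ij} ∈ G and elements d_{ij} ∈ S (for i = 1,…,m and j = 1,…,n) such that c ≺ Σ_{j=1}^n d_{1j}, Σ_{j=1}^n g_{ij}·d_{ij} ≺ Σ_{j=1}^n d_{i+1,j} for each i = 1,…,m−1, and Σ_{j=1}^n g_{mj}·d_{mj} ≺ b. Moreover, if S has almost refinement, then one may always take m = 1, i.e., (i) is equivalent to: for every c ≺ a, either c ≺ b or there exist n, elements g_1,…,g_n ∈ G and d_1,…,d_n ∈ S with c ≺ Σ_{j=1}^n d_j and Σ_{j=1}^n g_j·d_j ≺ b. -/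
universe u v

section
variable {S : Type u} {G : Type v} [AddCommMonoid S] [Group G]
variable {P : S → S → Prop} {act : G → S → S}

lemma sum_range_add' (f : ℕ → S) (m n : ℕ) :
    ∑ j ∈ Finset.range (m + n), f j
      = (∑ j ∈ Finset.range m, f j) + ∑ j ∈ Finset.range n, f (m + j) := by
  induction n with
  | zero => simp
  | succ n ih =>
      rw [← Nat.add_assoc, Finset.sum_range_succ, ih, Finset.sum_range_succ, add_assoc]

lemma sum_range_extend (f : ℕ → S) (n N : ℕ) (h : n ≤ N) (h0 : ∀ j, n ≤ j → f j = 0) :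
    ∑ j ∈ Finset.range N, f j = ∑ j ∈ Finset.range n, f j := by
  refine (Finset.sum_subset (Finset.range_subset_range.2 h) ?_).symm
  intro x _ hx
  exact h0 x (by simpa using hx)

lemma sumP (hT : Transitive P) (h0 : ∀ a, P 0 a) (hAdd : AddClosed P)
    (n : ℕ) (a b : ℕ → S) (h : ∀ j < n, P (a j) (b j)) :
    P (∑ j ∈ Finset.range n, a j) (∑ j ∈ Finset.range n, b j) := by
  induction n with
  | zero => simpa using h0 0
  | succ n ih =>
      rw [Finset.sum_range_succ, Finset.sum_range_succ]
      exact hAdd _ _ _ _ (ih fun j hj => h j (by omega)) (h n (by omega))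

lemma denseP (hT : Transitive P) (hW1 : AxiomW1 P) {a b : S} (h : P a b) :
    ∃ c, P a c ∧ P c b := by
  obtain ⟨f, hf1, hf2, hf3⟩ := hW1 b
  obtain ⟨k, hk⟩ := hf3 a h
  exact ⟨f (k + 1), hT hk (hf1 k), hf2 (k + 1)⟩

lemma splitW4 (hT : Transitive P) (hAdd : AddClosed P) (hW4 : AxiomW4 P) :
    ∀ (n : ℕ) (c : S) (b : ℕ → S), P c (∑ j ∈ Finset.range n, b j) →
    ∃ b' : ℕ → S, (∀ j < n, P (b' j) (b j)) ∧ P c (∑ j ∈ Finset.range n, b' j) := by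
  intro n
  induction n with
  | zero => intro c b h; exact ⟨b, by omega, by simpa using h⟩
  | succ n ih =>
      intro c b h
      rw [Finset.sum_range_succ] at h
      obtain ⟨x', y', hx', hy', hc⟩ := hW4 _ _ _ h
      obtain ⟨x'', y'', hx'', hy'', hc2⟩ := hW4 _ _ _ hc
      obtain ⟨b'', hb''1, hb''2⟩ := ih x' b hx'
      refine ⟨fun j => if j < n then b'' j else y', ?_, ?_⟩
      · intro j hj
        by_cases hjn : j < n
        · simpa [hjn] using hb''1 j hjn
        · have : j = n := by omega
          simp [hjn, this, hy']
      · rw [Finset.sum_range_succ]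
        have he : ∑ j ∈ Finset.range n, (if j < n then b'' j else y') = ∑ j ∈ Finset.range n, b'' j :=
          Finset.sum_congr rfl fun j hj => by simp [Finset.mem_range.1 hj]
        simp only [lt_irrefl n, if_neg (lt_irrefl n)]
        rw [he]
        exact hT hc2 (hAdd _ _ _ _ (hT hx'' hb''2) hy'')

lemma choose_fun (n : ℕ) (Q : ℕ → S → Prop) (h : ∀ j < n, ∃ y, Q j y) :
    ∃ f : ℕ → S, ∀ j < n, Q j (f j) := by
  refine ⟨fun j => if hj : j < n then (h j hj).choose else 0, fun j hj => ?_⟩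
  simp only [dif_pos hj]
  exact (h j hj).choose_spec

lemma act_sum (hactadd : ∀ (g : G) (a b : S), act g (a + b) = act g a + act g b)
    (g : G) (f : ℕ → S) : ∀ k, 0 < k →
    act g (∑ j ∈ Finset.range k, f j) = ∑ j ∈ Finset.range k, act g (f j) := by
  intro k
  induction k with
  | zero => omega
  | succ k ih =>
      intro _
      rcases Nat.eq_zero_or_pos k with hk | hk
      · subst hk; simp
      · rw [Finset.sum_range_succ, Finset.sum_range_succ, hactadd, ih hk]

lemma sum_mul_flatten (f : ℕ → ℕ → S) (n n' : ℕ) (h : 0 < n') :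
    ∑ k ∈ Finset.range (n * n'), f (k / n') (k % n')
      = ∑ i ∈ Finset.range n, ∑ j ∈ Finset.range n', f i j := by
  induction n with
  | zero => simp
  | succ n ih =>
      rw [Finset.sum_range_succ, ← ih, Nat.succ_mul, sum_range_add']
      congr 1
      refine Finset.sum_congr rfl fun j hj => ?_
      have hj' : j < n' := Finset.mem_range.1 hj
      have h1 : (n * n' + j) / n' = n := by
        rw [Nat.mul_comm, Nat.mul_add_div h, Nat.div_eq_of_lt hj', Nat.add_zero]
      have h2 : (n * n' + j) % n' = j := by
        rw [Nat.mul_comm, Nat.mul_add_mod, Nat.mod_eq_of_lt hj']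
      rw [h1, h2]

def ChainData (P : S → S → Prop) (act : G → S → S) (g : ℕ → ℕ → G) (d : ℕ → ℕ → S)
    (c b : S) (m n : ℕ) : Prop :=
  P c (∑ j ∈ Finset.range n, d 0 j) ∧
  (∀ i, i + 1 < m →
    P (∑ j ∈ Finset.range n, act (g i j) (d i j)) (∑ j ∈ Finset.range n, d (i + 1) j)) ∧
  P (∑ j ∈ Finset.range n, act (g (m - 1) j) (d (m - 1) j)) b

def Chain (P : S → S → Prop) (act : G → S → S) (c b : S) : Prop :=
  ∃ m n : ℕ, 0 < m ∧ 0 < n ∧ ∃ (g : ℕ → ℕ → G) (d : ℕ → ℕ → S), ChainData P act g d c b m n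

lemma chaindata_mono_left (hT : Transitive P) {g d c c' b m n}
    (h : P c' c) (hc : ChainData P act g d c b m n) : ChainData P act g d c' b m n :=
  ⟨hT h hc.1, hc.2.1, hc.2.2⟩

lemma chain_mono_left (hT : Transitive P) {c c' b : S}
    (h : P c' c) (hc : Chain P act c b) : Chain P act c' b := by
  obtain ⟨m, n, hm, hn, g, d, hcd⟩ := hc
  exact ⟨m, n, hm, hn, g, d, chaindata_mono_left hT h hcd⟩

lemma chain_of_P (hone : ∀ a : S, act 1 a = a) {c' c b : S}
    (h1 : P c' c) (h2 : P c b) : Chain P act c' b := by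
  refine ⟨1, 1, one_pos, one_pos, fun _ _ => 1, fun _ _ => c, ?_, ?_, ?_⟩
  · simpa using h1
  · omega
  · simpa [hone] using h2

/-- Pad columns of a chain: the row sums are unchanged. -/
lemma chain_pad (hone : ∀ a : S, act 1 a = a) {g : ℕ → ℕ → G} {d : ℕ → ℕ → S} {c b : S}
    {m n : ℕ} (N : ℕ) (hnN : n ≤ N)
    (h : ChainData P act g d c b m n) :
    ∃ (g' : ℕ → ℕ → G) (d' : ℕ → ℕ → S), ChainData P act g' d' c b m N ∧
      (∀ i, ∑ j ∈ Finset.range N, d' i j = ∑ j ∈ Finset.range n, d i j) ∧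
      (∀ i, ∑ j ∈ Finset.range N, act (g' i j) (d' i j)
          = ∑ j ∈ Finset.range n, act (g i j) (d i j)) := by
  refine ⟨fun i j => if j < n then g i j else 1, fun i j => if j < n then d i j else 0,
    ?_, ?_, ?_⟩
  case refine_2 =>
    intro i
    rw [sum_range_extend _ n N hnN (fun j hj => by simp [Nat.not_lt.2 hj])]
    exact Finset.sum_congr rfl fun j hj => by simp [Finset.mem_range.1 hj]
  case refine_3 =>
    intro i
    rw [sum_range_extend _ n N hnN (fun j hj => by simp [Nat.not_lt.2 hj, hone])]
    exact Finset.sum_congr rfl fun j hj => by simp [Finset.mem_range.1 hj]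
  all_goals
  have e1 : ∀ i, ∑ j ∈ Finset.range N, (if j < n then d i j else 0)
      = ∑ j ∈ Finset.range n, d i j := by
    intro i
    rw [sum_range_extend _ n N hnN (fun j hj => by simp [Nat.not_lt.2 hj])]
    exact Finset.sum_congr rfl fun j hj => by simp [Finset.mem_range.1 hj]
  have e2 : ∀ i, ∑ j ∈ Finset.range N,
        act (if j < n then g i j else 1) (if j < n then d i j else 0)
      = ∑ j ∈ Finset.range n, act (g i j) (d i j) := by
    intro i
    rw [sum_range_extend _ n N hnN (fun j hj => by simp [Nat.not_lt.2 hj, hone])]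
    exact Finset.sum_congr rfl fun j hj => by simp [Finset.mem_range.1 hj]
  exact ⟨by rw [e1]; exact h.1, fun i hi => by rw [e1, e2]; exact h.2.1 i hi,
    by rw [e2]; exact h.2.2⟩

/-- Compose two chains with the same number of columns. -/
lemma chain_compose {g1 g2 : ℕ → ℕ → G} {d1 d2 : ℕ → ℕ → S} {c b e : S} {m m' n : ℕ}
    (hm : 0 < m) (hm' : 0 < m')
    (h1 : ChainData P act g1 d1 c b m n)
    (hlink : P (∑ j ∈ Finset.range n, act (g1 (m - 1) j) (d1 (m - 1) j))
      (∑ j ∈ Finset.range n, d2 0 j))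
    (h2rows : ∀ i, i + 1 < m' →
      P (∑ j ∈ Finset.range n, act (g2 i j) (d2 i j)) (∑ j ∈ Finset.range n, d2 (i + 1) j))
    (h2last : P (∑ j ∈ Finset.range n, act (g2 (m' - 1) j) (d2 (m' - 1) j)) e) :
    ChainData P act (fun i j => if i < m then g1 i j else g2 (i - m) j)
      (fun i j => if i < m then d1 i j else d2 (i - m) j) c e (m + m') n := by
  refine ⟨?_, ?_, ?_⟩
  · have : ∀ j ∈ Finset.range n, (if 0 < m then d1 0 j else d2 (0 - m) j) = d1 0 j :=
      fun j _ => if_pos hm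
    rw [Finset.sum_congr rfl this]
    exact h1.1
  · intro i hi
    rcases lt_trichotomy (i + 1) m with h | h | h
    · have hi' : i < m := by omega
      have e1 : ∀ j ∈ Finset.range n, act (if i < m then g1 i j else g2 (i - m) j)
          (if i < m then d1 i j else d2 (i - m) j) = act (g1 i j) (d1 i j) :=
        fun j _ => by rw [if_pos hi', if_pos hi']
      have e2 : ∀ j ∈ Finset.range n, (if i + 1 < m then d1 (i + 1) j else d2 (i + 1 - m) j)
          = d1 (i + 1) j := fun j _ => if_pos h
      rw [Finset.sum_congr rfl e1, Finset.sum_congr rfl e2]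
      exact h1.2.1 i h
    · have hi' : i < m := by omega
      have hieq : i = m - 1 := by omega
      have e1 : ∀ j ∈ Finset.range n, act (if i < m then g1 i j else g2 (i - m) j)
          (if i < m then d1 i j else d2 (i - m) j) = act (g1 (m - 1) j) (d1 (m - 1) j) :=
        fun j _ => by rw [if_pos hi', if_pos hi', hieq]
      have e2 : ∀ j ∈ Finset.range n, (if i + 1 < m then d1 (i + 1) j else d2 (i + 1 - m) j)
          = d2 0 j := fun j _ => by rw [if_neg (by omega), h, Nat.sub_self]
      rw [Finset.sum_congr rfl e1, Finset.sum_congr rfl e2]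
      exact hlink
    · have hi' : ¬ i < m := by omega
      have e1 : ∀ j ∈ Finset.range n, act (if i < m then g1 i j else g2 (i - m) j)
          (if i < m then d1 i j else d2 (i - m) j) = act (g2 (i - m) j) (d2 (i - m) j) :=
        fun j _ => by rw [if_neg hi', if_neg hi']
      have e2 : ∀ j ∈ Finset.range n, (if i + 1 < m then d1 (i + 1) j else d2 (i + 1 - m) j)
          = d2 (i - m + 1) j := fun j _ => by rw [if_neg (by omega)]; congr 1; omega
      rw [Finset.sum_congr rfl e1, Finset.sum_congr rfl e2]
      exact h2rows (i - m) (by omega)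
  · have hi' : ¬ m + m' - 1 < m := by omega
    have e1 : ∀ j ∈ Finset.range n,
        act (if m + m' - 1 < m then g1 (m + m' - 1) j else g2 (m + m' - 1 - m) j)
          (if m + m' - 1 < m then d1 (m + m' - 1) j else d2 (m + m' - 1 - m) j)
        = act (g2 (m' - 1) j) (d2 (m' - 1) j) :=
      fun j _ => by rw [if_neg hi', if_neg hi']; congr 2 <;> omega
    rw [Finset.sum_congr rfl e1]
    exact h2last

/-- Concatenate two chains with the same number of rows, adding sources and targets. -/
lemma chain_addconcat (hAdd : AddClosed P) {g1 g2 : ℕ → ℕ → G} {d1 d2 : ℕ → ℕ → S}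
    {u v b b' : S} {m n1 n2 : ℕ}
    (h1 : ChainData P act g1 d1 u b m n1) (h2 : ChainData P act g2 d2 v b' m n2) :
    ChainData P act (fun i j => if j < n1 then g1 i j else g2 i (j - n1))
      (fun i j => if j < n1 then d1 i j else d2 i (j - n1)) (u + v) (b + b') m (n1 + n2) := by
  have key : ∀ (F1 F2 : ℕ → ℕ → S), (∀ i j, j < n1 → F1 i j = F2 i j) →
      (∀ i j, ¬ j < n1 → F1 i j = F2 i j) → True := fun _ _ _ _ => trivial
  have esum : ∀ F : ℕ → S, ∑ j ∈ Finset.range (n1 + n2), F j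
      = (∑ j ∈ Finset.range n1, F j) + ∑ j ∈ Finset.range n2, F (n1 + j) :=
    fun F => sum_range_add' F n1 n2
  have eD : ∀ i, ∑ j ∈ Finset.range (n1 + n2), (if j < n1 then d1 i j else d2 i (j - n1))
      = (∑ j ∈ Finset.range n1, d1 i j) + ∑ j ∈ Finset.range n2, d2 i j := by
    intro i
    rw [esum]
    congr 1
    · exact Finset.sum_congr rfl fun j hj => if_pos (Finset.mem_range.1 hj)
    · exact Finset.sum_congr rfl fun j _ => by rw [if_neg (by omega)]; congr 1; omega
  have eA : ∀ i, ∑ j ∈ Finset.range (n1 + n2),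
        act (if j < n1 then g1 i j else g2 i (j - n1)) (if j < n1 then d1 i j else d2 i (j - n1))
      = (∑ j ∈ Finset.range n1, act (g1 i j) (d1 i j))
        + ∑ j ∈ Finset.range n2, act (g2 i j) (d2 i j) := by
    intro i
    rw [esum]
    congr 1
    · exact Finset.sum_congr rfl fun j hj => by
        rw [if_pos (Finset.mem_range.1 hj), if_pos (Finset.mem_range.1 hj)]
    · exact Finset.sum_congr rfl fun j _ => by
        rw [if_neg (by omega), if_neg (by omega)]; congr 2 <;> omega
  refine ⟨?_, ?_, ?_⟩
  · rw [eD]; exact hAdd _ _ _ _ h1.1 h2.1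
  · intro i hi
    rw [eA, eD]
    exact hAdd _ _ _ _ (h1.2.1 i hi) (h2.2.1 i hi)
  · rw [eA]
    exact hAdd _ _ _ _ h1.2.2 h2.2.2

/-- Extend a chain by one row. -/
lemma chain_extend (hT : Transitive P) (hW1 : AxiomW1 P) (hone : ∀ a : S, act 1 a = a)
    {g : ℕ → ℕ → G} {d : ℕ → ℕ → S} {c b : S} {m n : ℕ} (hm : 0 < m) (hn : 0 < n)
    (h : ChainData P act g d c b m n) :
    ∃ (g' : ℕ → ℕ → G) (d' : ℕ → ℕ → S), ChainData P act g' d' c b (m + 1) n := by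
  obtain ⟨y, hy1, hy2⟩ := denseP hT hW1 h.2.2
  refine ⟨fun i j => if i < m then g i j else 1,
    fun i j => if i < m then d i j else if j = 0 then y else 0, ?_, ?_, ?_⟩
  · have e : ∀ j ∈ Finset.range n, (if 0 < m then d 0 j else if j = 0 then y else 0) = d 0 j :=
      fun j _ => if_pos hm
    rw [Finset.sum_congr rfl e]; exact h.1
  · intro i hi
    rcases lt_trichotomy (i + 1) m with hlt | heq | hgt
    · have hi' : i < m := by omega
      have e1 : ∀ j ∈ Finset.range n, act (if i < m then g i j else 1)
          (if i < m then d i j else if j = 0 then y else 0) = act (g i j) (d i j) :=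
        fun j _ => by rw [if_pos hi', if_pos hi']
      have e2 : ∀ j ∈ Finset.range n,
          (if i + 1 < m then d (i + 1) j else if j = 0 then y else 0) = d (i + 1) j :=
        fun j _ => if_pos hlt
      rw [Finset.sum_congr rfl e1, Finset.sum_congr rfl e2]
      exact h.2.1 i hlt
    · have hi' : i < m := by omega
      have hieq : i = m - 1 := by omega
      have e1 : ∀ j ∈ Finset.range n, act (if i < m then g i j else 1)
          (if i < m then d i j else if j = 0 then y else 0)
          = act (g (m - 1) j) (d (m - 1) j) :=
        fun j _ => by rw [if_pos hi', if_pos hi', hieq]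
      have e2 : ∀ j ∈ Finset.range n,
          (if i + 1 < m then d (i + 1) j else if j = 0 then y else 0)
          = (if j = 0 then y else 0) := fun j _ => if_neg (by omega)
      rw [Finset.sum_congr rfl e1, Finset.sum_congr rfl e2]
      have : ∑ j ∈ Finset.range n, (if j = 0 then y else 0) = y := by
        rw [Finset.sum_ite_eq' (Finset.range n) 0 fun _ => y]
        simp [hn]
      rw [this]
      exact hy1
    · omega
  · have hi' : ¬ m + 1 - 1 < m := by omega
    have e1 : ∀ j ∈ Finset.range n, act (if m + 1 - 1 < m then g (m + 1 - 1) j else 1)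
        (if m + 1 - 1 < m then d (m + 1 - 1) j else if j = 0 then y else 0)
        = (if j = 0 then y else 0) := by
      intro j _
      rw [if_neg hi', if_neg hi', hone]
    rw [Finset.sum_congr rfl e1]
    have : ∑ j ∈ Finset.range n, (if j = 0 then y else 0) = y := by
      rw [Finset.sum_ite_eq' (Finset.range n) 0 fun _ => y]
      simp [hn]
    rw [this]
    exact hy2

/-- Extend a chain to any larger number of rows. -/
lemma chain_rows_to (hT : Transitive P) (hW1 : AxiomW1 P) (hone : ∀ a : S, act 1 a = a)
    {g : ℕ → ℕ → G} {d : ℕ → ℕ → S} {c b : S} {m n : ℕ} (hm : 0 < m) (hn : 0 < n)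
    (h : ChainData P act g d c b m n) (M : ℕ) (hM : m ≤ M) :
    ∃ (g' : ℕ → ℕ → G) (d' : ℕ → ℕ → S), ChainData P act g' d' c b M n := by
  obtain ⟨k, rfl⟩ := Nat.exists_eq_add_of_le hM
  clear hM
  induction k with
  | zero => exact ⟨g, d, h⟩
  | succ k ih =>
      obtain ⟨g', d', h'⟩ := ih
      obtain ⟨g'', d'', h''⟩ := chain_extend hT hW1 hone (by omega) hn h'
      exact ⟨g'', d'', h''⟩


/-- A chain implies `L` for any generated-good `L`. -/
lemma chain_le_L (hT : Transitive P)
    (hmono : ∀ (g : G) (a b : S), P a b → P (act g a) (act g b))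
    (hone : ∀ a : S, act 1 a = a)
    (hmul : ∀ (g h : G) (a : S), act (g * h) a = act g (act h a))
    {L : S → S → Prop} (hL : GenGoodAdd P (fun a b => ∃ g : G, a = act g b) L) :
    ∀ (b : S), (∀ {x y : S}, P x y → L x y) →
    ∀ (m : ℕ) (c : S) (g : ℕ → ℕ → G) (d : ℕ → ℕ → S) (n : ℕ),
      ChainData P act g d c b (m + 1) n → L c b := by
  intro b LofP m
  obtain ⟨⟨hrefl, htrans, hInd, hR, happrox⟩, hLadd⟩ := hL
  have sumL : ∀ (k : ℕ) (f h : ℕ → S), (∀ j < k, L (f j) (h j)) →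
      L (∑ j ∈ Finset.range k, f j) (∑ j ∈ Finset.range k, h j) := by
    intro k
    induction k with
    | zero => intro f h _; simpa using hrefl 0
    | succ k ih =>
        intro f h hf
        rw [Finset.sum_range_succ, Finset.sum_range_succ]
        exact hLadd _ _ _ _ (ih f h fun j hj => hf j (by omega)) (hf k (by omega))
  have Lact : ∀ (g : G) (x : S), L x (act g x) := by
    intro g x
    refine hR x (act g x) ⟨g⁻¹, ?_⟩
    rw [← hmul, inv_mul_cancel, hone]
  induction m with
  | zero =>
      intro c g d n hc
      refine htrans (LofP hc.1) (htrans (sumL n _ _ fun j _ => Lact (g 0 j) (d 0 j)) ?_)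
      exact LofP hc.2.2
  | succ m ih =>
      intro c g d n hc
      have hrow0 : P (∑ j ∈ Finset.range n, act (g 0 j) (d 0 j))
          (∑ j ∈ Finset.range n, d 1 j) := hc.2.1 0 (by omega)
      have hshift : ChainData P act (fun i j => g (i + 1) j) (fun i j => d (i + 1) j)
          (∑ j ∈ Finset.range n, act (g 0 j) (d 0 j)) b (m + 1) n := by
        exact ⟨hrow0, fun i hi => hc.2.1 (i + 1) (by omega), hc.2.2⟩
      exact htrans (LofP hc.1)
        (htrans (sumL n _ _ fun j _ => Lact (g 0 j) (d 0 j)) (ih _ _ _ _ hshift))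

/-- Backward direction: the chain condition implies `L a b`. -/
lemma cond_to_L (hWs : IsWSemigroup P)
    (hmono : ∀ (g : G) (a b : S), P a b → P (act g a) (act g b))
    (hone : ∀ a : S, act 1 a = a)
    (hmul : ∀ (g h : G) (a : S), act (g * h) a = act g (act h a))
    {L : S → S → Prop} (hL : GenGoodAdd P (fun a b => ∃ g : G, a = act g b) L)
    {a b : S} (h : ∀ c, P c a → P c b ∨ Chain P act c b) : L a b := by
  obtain ⟨hT, h0, hAdd, hW1, hW4⟩ := hWs
  obtain ⟨⟨hrefl, htrans, hInd, hR, happrox⟩, hLadd⟩ := hL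
  have LofP : ∀ {x y : S}, P x y → L x y := fun {x y} hxy =>
    hInd x y fun z hz => hT hz hxy
  refine happrox a b fun c hc => ?_
  rcases h c hc with hcb | ⟨m, n, hm, hn, g, d, hcd⟩
  · exact LofP hcb
  · obtain ⟨m', rfl⟩ : ∃ m', m = m' + 1 := ⟨m - 1, by omega⟩
    exact chain_le_L hT hmono hone hmul ⟨⟨hrefl, htrans, hInd, hR, happrox⟩, hLadd⟩
      b (fun {x y} hxy => LofP hxy) m' c g d n hcd

lemma chain_lift (hT : Transitive P) (hone : ∀ a : S, act 1 a = a) {u' u b : S}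
    (hu : P u' u) (h : P u b ∨ Chain P act u b) : Chain P act u' b := by
  rcases h with h | h
  · exact chain_of_P hone hu h
  · exact chain_mono_left hT hu h

lemma L1_genGoodAdd (hWs : IsWSemigroup P)
    (hmono : ∀ (g : G) (a b : S), P a b → P (act g a) (act g b))
    (hactadd : ∀ (g : G) (a b : S), act g (a + b) = act g a + act g b)
    (hone : ∀ a : S, act 1 a = a)
    (hmul : ∀ (g h : G) (a : S), act (g * h) a = act g (act h a)) :
    GenGoodAdd P (fun a b => ∃ g : G, a = act g b)
      (fun a b => ∀ c, P c a → P c b ∨ Chain P act c b) := by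
  obtain ⟨hT, h0, hAdd, hW1, hW4⟩ := hWs
  refine ⟨⟨fun a c hc => Or.inl hc, ?_, fun a b h c hc => Or.inl (h c hc), ?_, ?_⟩, ?_⟩
  · -- transitivity
    rintro a b e h1 h2 c hc
    rcases h1 c hc with hcb | ⟨m, n, hm, hn, g, d, hcd⟩
    · exact h2 c hcb
    · rcases h2 _ hcd.2.2 with hxe | ⟨m', n', hm', hn', g2, d2, hcd2⟩
      · exact Or.inr ⟨m, n, hm, hn, g, d, hcd.1, hcd.2.1, hxe⟩
      · right
        set N := max n n' with hN
        obtain ⟨G1, D1, hC1, hD1, hA1⟩ := chain_pad hone N (le_max_left n n') hcd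
        obtain ⟨G2, D2, hC2, hD2, hA2⟩ := chain_pad hone N (le_max_right n n') hcd2
        refine ⟨m + m', N, by omega, by omega, _, _,
          chain_compose hm hm' hC1 ?_ hC2.2.1 hC2.2.2⟩
        rw [hA1 (m - 1), hD2 0]
        exact hcd2.1
  · -- relation R
    rintro a b ⟨g, rfl⟩ c hc
    obtain ⟨y, hy1, hy2⟩ := denseP hT hW1 hc
    right
    refine ⟨1, 1, one_pos, one_pos, fun _ _ => g⁻¹, fun _ _ => y, by simpa using hy1,
      by omega, ?_⟩
    have : P (act g⁻¹ y) (act g⁻¹ (act g b)) := hmono g⁻¹ _ _ hy2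
    rw [← hmul, inv_mul_cancel, hone] at this
    simpa using this
  · -- approximation
    intro a b h c hc
    obtain ⟨c', hcc', hc'a⟩ := denseP hT hW1 hc
    exact h c' hc'a c hcc'
  · -- additivity
    intro a b a' b' h1 h2 c hc
    obtain ⟨u, v, hu, hv, hcuv⟩ := hW4 _ _ _ hc
    obtain ⟨u', v', hu', hv', hcuv'⟩ := hW4 _ _ _ hcuv
    have c1 : Chain P act u' b := chain_lift hT hone hu' (h1 u hu)
    have c2 : Chain P act v' b' := chain_lift hT hone hv' (h2 v hv)
    obtain ⟨m1, n1, hm1, hn1, g1, d1, hcd1⟩ := c1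
    obtain ⟨m2, n2, hm2, hn2, g2, d2, hcd2⟩ := c2
    set M := max m1 m2 with hM
    obtain ⟨G1, D1, hC1⟩ := chain_rows_to hT hW1 hone hm1 hn1 hcd1 M (le_max_left m1 m2)
    obtain ⟨G2, D2, hC2⟩ := chain_rows_to hT hW1 hone hm2 hn2 hcd2 M (le_max_right m1 m2)
    right
    exact ⟨M, n1 + n2, by omega, by omega, _, _,
      chaindata_mono_left hT hcuv' (chain_addconcat hAdd hC1 hC2)⟩

/-- 2 × k refinement. -/
lemma GR2 (hWs : IsWSemigroup P) (hAR : HasAlmostRefinement P) :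
    ∀ k : ℕ, 0 < k → ∀ (a₁ a₂ a₁' a₂' : S) (b : ℕ → S), P a₁' a₁ → P a₂' a₂ →
      P (a₁ + a₂) (∑ j ∈ Finset.range k, b j) →
      ∃ x y : ℕ → S, P a₁' (∑ j ∈ Finset.range k, x j) ∧ P a₂' (∑ j ∈ Finset.range k, y j) ∧
        ∀ j < k, P (x j + y j) (b j) := by
  obtain ⟨hT, h0, hAdd, hW1, hW4⟩ := hWs
  intro k
  induction k with
  | zero => omega
  | succ k ih =>
      intro _ a₁ a₂ a₁' a₂' b h1 h2 h3
      rcases Nat.eq_zero_or_pos k with hk | hk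
      · subst hk
        obtain ⟨t₁, ht₁, ht₁'⟩ := denseP hT hW1 h1
        obtain ⟨t₂, ht₂, ht₂'⟩ := denseP hT hW1 h2
        rw [Finset.sum_range_one] at h3
        exact ⟨fun _ => t₁, fun _ => t₂, by simpa using ht₁, by simpa using ht₂,
          fun j hj => by
            have : j = 0 := by omega
            subst this
            exact hT (hAdd _ _ _ _ ht₁' ht₂') h3⟩
      · rw [Finset.sum_range_succ] at h3
        obtain ⟨x₁₁, x₁₂, x₂₁, x₂₂, hr1, hr2, hc1, hc2⟩ :=
          hAR a₁ a₂ a₁' a₂' _ _ h1 h2 h3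
        obtain ⟨p₁, q₁, hp₁, hq₁, hr1'⟩ := hW4 _ _ _ hr1
        obtain ⟨p₁', q₁', hp₁', hq₁', hr1''⟩ := hW4 _ _ _ hr1'
        obtain ⟨p₂, q₂, hp₂, hq₂, hr2'⟩ := hW4 _ _ _ hr2
        obtain ⟨p₂', q₂', hp₂', hq₂', hr2''⟩ := hW4 _ _ _ hr2'
        obtain ⟨u, w, hu, hw, hcol⟩ := ih hk x₁₁ x₂₁ p₁ p₂ b hp₁ hp₂ hc1
        refine ⟨fun j => if j < k then u j else q₁, fun j => if j < k then w j else q₂,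
          ?_, ?_, ?_⟩
        · rw [Finset.sum_range_succ, if_neg (lt_irrefl k),
            Finset.sum_congr rfl fun j hj => if_pos (Finset.mem_range.1 hj)]
          exact hT hr1'' (hAdd _ _ _ _ (hT hp₁' hu) hq₁')
        · rw [Finset.sum_range_succ, if_neg (lt_irrefl k),
            Finset.sum_congr rfl fun j hj => if_pos (Finset.mem_range.1 hj)]
          exact hT hr2'' (hAdd _ _ _ _ (hT hp₂' hw) hq₂')
        · intro j hj
          by_cases hjk : j < k
          · simpa only [hjk, if_true] using hcol j hjk
          · have : j = k := by omega
            subst this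
            simp only [hjk, if_false]
            exact hT (hAdd _ _ _ _ hq₁ hq₂) hc2

/-- n × k refinement. -/
lemma GRn (hWs : IsWSemigroup P) (hAR : HasAlmostRefinement P) :
    ∀ n k : ℕ, 0 < k → ∀ (a a' b : ℕ → S), (∀ i < n, P (a' i) (a i)) →
      P (∑ i ∈ Finset.range n, a i) (∑ j ∈ Finset.range k, b j) →
      ∃ x : ℕ → ℕ → S, (∀ i < n, P (a' i) (∑ j ∈ Finset.range k, x i j)) ∧
        (∀ j < k, P (∑ i ∈ Finset.range n, x i j) (b j)) := by
  have hT := hWs.1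
  have h0 := hWs.2.1
  have hAdd := hWs.2.2.1
  have hW1 := hWs.2.2.2.1
  have hW4 := hWs.2.2.2.2
  intro n
  induction n with
  | zero =>
      intro k hk a a' b _ _
      exact ⟨fun _ _ => 0, by omega, fun j hj => by simpa using h0 (b j)⟩
  | succ n ih =>
      intro k hk a a' b hrow hsum
      obtain ⟨a'', ha''⟩ := choose_fun (n + 1) (fun i t => P (a' i) t ∧ P t (a i))
        (fun i hi => denseP hT hW1 (hrow i hi))
      have hsum' : P (a 0 + ∑ i ∈ Finset.range n, a (i + 1))
          (∑ j ∈ Finset.range k, b j) := by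
        rw [add_comm, ← Finset.sum_range_succ']
        exact hsum
      have hs'' : P (∑ i ∈ Finset.range n, a'' (i + 1)) (∑ i ∈ Finset.range n, a (i + 1)) :=
        sumP hT h0 hAdd n _ _ fun i hi => (ha'' (i + 1) (by omega)).2
      obtain ⟨u, w, hu, hw, hcol⟩ := GR2 hWs hAR k hk (a 0) _ (a'' 0) _ b
        (ha'' 0 (by omega)).2 hs'' hsum'
      obtain ⟨u', hu'1, hu'2⟩ := splitW4 hT hAdd hW4 k (a' 0) u
        (hT (ha'' 0 (by omega)).1 hu)
      have hsw : P (∑ i ∈ Finset.range n, a'' (i + 1)) (∑ j ∈ Finset.range k, w j) := hw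
      obtain ⟨y, hy1, hy2⟩ := ih k hk (fun i => a'' (i + 1)) (fun i => a' (i + 1)) w
        (fun i hi => (ha'' (i + 1) (by omega)).1) hsw
      refine ⟨fun i j => if i = 0 then u' j else y (i - 1) j, ?_, ?_⟩
      · intro i hi
        rcases Nat.eq_zero_or_pos i with hi0 | hi0
        · subst hi0
          simpa using hu'2
        · obtain ⟨i', rfl⟩ : ∃ i', i = i' + 1 := ⟨i - 1, by omega⟩
          have e : ∀ j ∈ Finset.range k,
              (if i' + 1 = 0 then u' j else y (i' + 1 - 1) j) = y i' j :=
            fun j _ => by rw [if_neg (by omega)]; rfl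
          rw [Finset.sum_congr rfl e]
          exact hy1 i' (by omega)
      · intro j hj
        have e : ∑ i ∈ Finset.range (n + 1), (if i = 0 then u' j else y (i - 1) j)
            = (∑ i ∈ Finset.range n, y i j) + u' j := by
          rw [Finset.sum_range_succ']
          simp
        rw [e]
        refine hT (hAdd _ _ _ _ (hy2 j hj) (hu'1 j hj)) ?_
        rw [add_comm]
        exact hcol j hj

def Chain1 (P : S → S → Prop) (act : G → S → S) (c b : S) : Prop :=
  ∃ n : ℕ, 0 < n ∧ ∃ (g : ℕ → G) (d : ℕ → S),
    P c (∑ j ∈ Finset.range n, d j) ∧ P (∑ j ∈ Finset.range n, act (g j) (d j)) b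

lemma chain1_lift (hT : Transitive P) (hone : ∀ a : S, act 1 a = a) {u' u b : S}
    (hu : P u' u) (h : P u b ∨ Chain1 P act u b) : Chain1 P act u' b := by
  rcases h with h | ⟨n, hn, g, d, hs, hl⟩
  · exact ⟨1, one_pos, fun _ => 1, fun _ => u, by simpa using hu, by simpa [hone] using h⟩
  · exact ⟨n, hn, g, d, hT hu hs, hl⟩

lemma L2_genGoodAdd (hWs : IsWSemigroup P) (hAR : HasAlmostRefinement P)
    (hmono : ∀ (g : G) (a b : S), P a b → P (act g a) (act g b))
    (hactadd : ∀ (g : G) (a b : S), act g (a + b) = act g a + act g b)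
    (hone : ∀ a : S, act 1 a = a)
    (hmul : ∀ (g h : G) (a : S), act (g * h) a = act g (act h a)) :
    GenGoodAdd P (fun a b => ∃ g : G, a = act g b)
      (fun a b => ∀ c, P c a → P c b ∨ Chain1 P act c b) := by
  obtain ⟨hT, h0, hAdd, hW1, hW4⟩ := hWs
  refine ⟨⟨fun a c hc => Or.inl hc, ?_, fun a b h c hc => Or.inl (h c hc), ?_, ?_⟩, ?_⟩
  · -- transitivity, via compression
    rintro a b e h1 h2 c hc
    rcases h1 c hc with hcb | ⟨n, hn, g, d, hs, hl⟩
    · exact h2 c hcb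
    · rcases h2 _ hl with hxe | ⟨n', hn', g', d', hs', hl'⟩
      · exact Or.inr ⟨n, hn, g, d, hs, hxe⟩
      · right
        -- compress the two steps using refinement
        obtain ⟨d₁, hd₁, hcd₁⟩ := splitW4 hT hAdd hW4 n c d hs
        obtain ⟨d₂, hd₂⟩ := choose_fun n (fun i t => P (d₁ i) t ∧ P t (d i))
          (fun i hi => denseP hT hW1 (hd₁ i hi))
        have hrows : ∀ i < n, P (act (g i) (d₂ i)) (act (g i) (d i)) :=
          fun i hi => hmono _ _ _ (hd₂ i hi).2
        obtain ⟨x, hx1, hx2⟩ := GRn ⟨hT, h0, hAdd, hW1, hW4⟩ hAR n n' hn'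
          (fun i => act (g i) (d i)) (fun i => act (g i) (d₂ i)) d' hrows hs'
        refine ⟨n * n', Nat.mul_pos hn hn', fun k => g' (k % n') * g (k / n'),
          fun k => act (g (k / n'))⁻¹ (x (k / n') (k % n')), ?_, ?_⟩
        · have hper : ∀ i < n, P (d₁ i) (∑ j ∈ Finset.range n', act (g i)⁻¹ (x i j)) := by
            intro i hi
            have h' := hmono (g i)⁻¹ _ _ (hx1 i hi)
            rw [← hmul, inv_mul_cancel, hone, act_sum hactadd _ _ n' hn'] at h'
            exact hT (hd₂ i hi).1 h'
          have eflat : ∑ k ∈ Finset.range (n * n'),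
                act (g (k / n'))⁻¹ (x (k / n') (k % n'))
              = ∑ i ∈ Finset.range n, ∑ j ∈ Finset.range n', act (g i)⁻¹ (x i j) :=
            sum_mul_flatten (fun i j => act (g i)⁻¹ (x i j)) n n' hn'
          rw [eflat]
          exact hT hcd₁ (sumP hT h0 hAdd n _ _ hper)
        · have eact : ∀ k, act (g' (k % n') * g (k / n'))
                (act (g (k / n'))⁻¹ (x (k / n') (k % n')))
              = act (g' (k % n')) (x (k / n') (k % n')) := by
            intro k
            rw [hmul, ← hmul (g (k / n')) (g (k / n'))⁻¹, mul_inv_cancel, hone]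
          rw [Finset.sum_congr rfl fun k _ => eact k,
            sum_mul_flatten (fun i j => act (g' j) (x i j)) n n' hn', Finset.sum_comm]
          refine hT (sumP hT h0 hAdd n' _ _ ?_) hl'
          intro j hj
          have h2 := hmono (g' j) _ _ (hx2 j hj)
          rw [act_sum hactadd _ _ n hn] at h2
          exact h2
  · -- relation R
    rintro a b ⟨g, rfl⟩ c hc
    obtain ⟨y, hy1, hy2⟩ := denseP hT hW1 hc
    right
    refine ⟨1, one_pos, fun _ => g⁻¹, fun _ => y, by simpa using hy1, ?_⟩
    have : P (act g⁻¹ y) (act g⁻¹ (act g b)) := hmono g⁻¹ _ _ hy2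
    rw [← hmul, inv_mul_cancel, hone] at this
    simpa using this
  · -- approximation
    intro a b h c hc
    obtain ⟨c', hcc', hc'a⟩ := denseP hT hW1 hc
    exact h c' hc'a c hcc'
  · -- additivity
    intro a b a' b' h1 h2 c hc
    obtain ⟨u, v, hu, hv, hcuv⟩ := hW4 _ _ _ hc
    obtain ⟨u', v', hu', hv', hcuv'⟩ := hW4 _ _ _ hcuv
    obtain ⟨n1, hn1, g1, d1, hs1, hl1⟩ := chain1_lift hT hone hu' (h1 u hu)
    obtain ⟨n2, hn2, g2, d2, hs2, hl2⟩ := chain1_lift hT hone hv' (h2 v hv)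
    right
    refine ⟨n1 + n2, by omega, fun j => if j < n1 then g1 j else g2 (j - n1),
      fun j => if j < n1 then d1 j else d2 (j - n1), ?_, ?_⟩
    · have e : ∑ j ∈ Finset.range (n1 + n2), (if j < n1 then d1 j else d2 (j - n1))
          = (∑ j ∈ Finset.range n1, d1 j) + ∑ j ∈ Finset.range n2, d2 j := by
        rw [sum_range_add']
        congr 1
        · exact Finset.sum_congr rfl fun j hj => if_pos (Finset.mem_range.1 hj)
        · exact Finset.sum_congr rfl fun j _ => by rw [if_neg (by omega)]; congr 1; omega
      rw [e]
      exact hT hcuv' (hAdd _ _ _ _ hs1 hs2)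
    · have e : ∑ j ∈ Finset.range (n1 + n2),
            act (if j < n1 then g1 j else g2 (j - n1)) (if j < n1 then d1 j else d2 (j - n1))
          = (∑ j ∈ Finset.range n1, act (g1 j) (d1 j))
            + ∑ j ∈ Finset.range n2, act (g2 j) (d2 j) := by
        rw [sum_range_add']
        congr 1
        · exact Finset.sum_congr rfl fun j hj => by
            rw [if_pos (Finset.mem_range.1 hj), if_pos (Finset.mem_range.1 hj)]
        · exact Finset.sum_congr rfl fun j _ => by
            rw [if_neg (by omega), if_neg (by omega)]; congr 2 <;> omega
      rw [e]
      exact hAdd _ _ _ _ hl1 hl2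

lemma chain1_to_chain {c b : S} (h : Chain1 P act c b) : Chain P act c b := by
  obtain ⟨n, hn, g, d, hs, hl⟩ := h
  exact ⟨1, n, one_pos, hn, fun _ j => g j, fun _ j => d j, hs, by omega, hl⟩

end

/-- concrete description of the dynamical preorder `≤_G` on a W-semigroup
with a group action. -/
theorem statement19 {S : Type u} {G : Type v} [AddCommMonoid S] [Group G]
    (P : S → S → Prop) (hW : IsWSemigroup P)
    (act : G → S → S)
    (hmono : ∀ (g : G) (a b : S), P a b → P (act g a) (act g b))
    (hactadd : ∀ (g : G) (a b : S), act g (a + b) = act g a + act g b)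
    (hone : ∀ a : S, act 1 a = a)
    (hmul : ∀ (g h : G) (a : S), act (g * h) a = act g (act h a))
    (L : S → S → Prop)
    (hL : GenGoodAdd P (fun a b => ∃ g : G, a = act g b) L)
    (hmin : ∀ L', GenGoodAdd P (fun a b => ∃ g : G, a = act g b) L' → RelLE L L') :
    (∀ a b, L a b ↔ ∀ c, P c a → (P c b ∨
      ∃ m n : ℕ, 0 < m ∧ 0 < n ∧ ∃ (g : ℕ → ℕ → G) (d : ℕ → ℕ → S),
        P c (∑ j ∈ Finset.range n, d 0 j) ∧
        (∀ i, i + 1 < m →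
          P (∑ j ∈ Finset.range n, act (g i j) (d i j))
            (∑ j ∈ Finset.range n, d (i + 1) j)) ∧
        P (∑ j ∈ Finset.range n, act (g (m - 1) j) (d (m - 1) j)) b)) ∧
    (HasAlmostRefinement P →
      ∀ a b, L a b ↔ ∀ c, P c a → (P c b ∨
        ∃ n : ℕ, 0 < n ∧ ∃ (g : ℕ → G) (d : ℕ → S),
          P c (∑ j ∈ Finset.range n, d j) ∧
          P (∑ j ∈ Finset.range n, act (g j) (d j)) b)) := by
  constructor
  · intro a b
    constructor
    · intro hab c hc
      exact (hmin _ (L1_genGoodAdd hW hmono hactadd hone hmul) a b hab) c hc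
    · intro h
      exact cond_to_L hW hmono hone hmul hL fun c hc => h c hc
  · intro hAR a b
    constructor
    · intro hab c hc
      exact (hmin _ (L2_genGoodAdd hW hAR hmono hactadd hone hmul) a b hab) c hc
    · intro h
      refine cond_to_L hW hmono hone hmul hL fun c hc => ?_
      rcases h c hc with h' | h'
      · exact Or.inl h'
      · exact Or.inr (chain1_to_chain h')
end
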